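/- arXiv:2408.09539 — 3 statements merged into one kernel-verified Lean document; each statement's English description precedes it below -/
import Mathlib

section
/- Aggregated alignment bound (bound A1). Let E be a real inner product space, let x ∈ E be nonzero, and let v = x/‖x‖. Let ι be a finite index set with nonnegative weights (α_m)_{m∈ι} summing to 1, let B ⊆ ι, and set C_α = Σ_{m∉B} α_m. Let (u_m)_{m∈ι} be unit vectors such that ‖u_m − v‖ ≤ θ for every m ∉ B (the vectors u_m for m ∈ B are arbitrary unit vectors). Then ⟨x, Σ_{m∈ι} α_m u_m⟩ ≥ ((2 − θ²/2)·C_α − 1)·‖x‖. -/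
/-!
Write `v = x / ‖x‖`. For unit vectors, `‖u - v‖² = 2 - 2⟪u, v⟫`, so an honest direction within
`θ` of `v` satisfies `⟪x, u⟫ ≥ (1 - θ²/2)‖x‖`, while Cauchy–Schwarz gives `⟪x, u⟫ ≥ -‖x‖` for any
unit `u`. Averaging with weights `α`, the honest mass `C_α` contributes at least `(1 - θ²/2) C_α ‖x‖`
and the remaining mass `1 - C_α` at least `-(1 - C_α) ‖x‖`.
-/

open Finset
open scoped InnerProductSpace

section UnitVectors

variable {E : Type*} [NormedAddCommGroup E] [InnerProductSpace ℝ E]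

theorem one_sub_sq_div_two_le_real_inner_of_norm_sub_le {u v : E} {θ : ℝ}
    (hu : ‖u‖ = 1) (hv : ‖v‖ = 1) (huv : ‖u - v‖ ≤ θ) : 1 - θ ^ 2 / 2 ≤ ⟪v, u⟫_ℝ := by
  have hsq : ‖u - v‖ ^ 2 ≤ θ ^ 2 := pow_le_pow_left₀ (norm_nonneg _) huv 2
  rw [norm_sub_sq_real, hu, hv, real_inner_comm] at hsq
  linarith

theorem mul_norm_le_real_inner_of_norm_sub_normalize_le {x u : E} {θ : ℝ}
    (hu : ‖u‖ = 1) (hxu : ‖u - ‖x‖⁻¹ • x‖ ≤ θ) : (1 - θ ^ 2 / 2) * ‖x‖ ≤ ⟪x, u⟫_ℝ := by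
  rcases eq_or_ne x 0 with rfl | hx
  · simp
  have hinner : ⟪x, u⟫_ℝ = ‖x‖ * ⟪‖x‖⁻¹ • x, u⟫_ℝ := by
    rw [real_inner_smul_left, ← mul_assoc, mul_inv_cancel₀ (norm_ne_zero_iff.mpr hx), one_mul]
  rw [hinner, mul_comm]
  exact mul_le_mul_of_nonneg_left
    (one_sub_sq_div_two_le_real_inner_of_norm_sub_le hu (norm_smul_inv_norm hx) hxu)
    (norm_nonneg x)

theorem neg_norm_le_real_inner_of_norm_eq_one {x u : E} (hu : ‖u‖ = 1) : -‖x‖ ≤ ⟪x, u⟫_ℝ := by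
  simpa [hu] using neg_le_of_abs_le (abs_real_inner_le_norm x u)

end UnitVectors

theorem Finset.mul_sum_compl_add_mul_sum_le_sum_mul {ι : Type*} [Fintype ι] [DecidableEq ι]
    (B : Finset ι) {w f : ι → ℝ} {a b : ℝ} (hw : ∀ m, 0 ≤ w m)
    (ha : ∀ m ∉ B, a ≤ f m) (hb : ∀ m, b ≤ f m) :
    a * ∑ m ∈ Bᶜ, w m + b * ∑ m ∈ B, w m ≤ ∑ m, w m * f m := by
  rw [← sum_compl_add_sum B, mul_sum, mul_sum]
  refine add_le_add (sum_le_sum fun m hm => ?_) (sum_le_sum fun m _ => ?_)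
  · rw [mul_comm]
    exact mul_le_mul_of_nonneg_left (ha m (mem_compl.mp hm)) (hw m)
  · rw [mul_comm]
    exact mul_le_mul_of_nonneg_left (hb m) (hw m)

theorem aggregated_alignment_bound_general
    {E : Type*} [NormedAddCommGroup E] [InnerProductSpace ℝ E]
    {ι : Type*} [Fintype ι] [DecidableEq ι]
    (x : E)
    (α : ι → ℝ) (hα : ∀ m, 0 ≤ α m) (hαsum : ∑ m, α m = 1)
    (B : Finset ι)
    (Cα θ : ℝ) (hCα : Cα = ∑ m ∈ Bᶜ, α m)
    (u : ι → E) (hu : ∀ m, ‖u m‖ = 1)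
    (hθ : ∀ m ∉ B, ‖u m - ‖x‖⁻¹ • x‖ ≤ θ) :
    ⟪x, ∑ m, α m • u m⟫_ℝ ≥ ((2 - θ ^ 2 / 2) * Cα - 1) * ‖x‖ := by
  have hB : ∑ m ∈ B, α m = 1 - Cα := by
    rw [hCα, ← hαsum, ← sum_compl_add_sum B]
    ring
  have hsplit := B.mul_sum_compl_add_mul_sum_le_sum_mul (f := fun m => ⟪x, u m⟫_ℝ) hα
    (fun m hm => mul_norm_le_real_inner_of_norm_sub_normalize_le (hu m) (hθ m hm))
    (fun m => neg_norm_le_real_inner_of_norm_eq_one (hu m))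
  rw [← hCα, hB] at hsplit
  simp only [inner_sum, real_inner_smul_right]
  linarith

/-- Aggregated alignment bound (bound A1). -/
theorem aggregated_alignment_bound
    {E : Type*} [NormedAddCommGroup E] [InnerProductSpace ℝ E]
    {ι : Type*} [Fintype ι] [DecidableEq ι]
    (x : E) (hx : x ≠ 0)
    (α : ι → ℝ) (hα : ∀ m, 0 ≤ α m) (hαsum : ∑ m, α m = 1)
    (B : Finset ι)
    (Cα θ : ℝ) (hCα : Cα = ∑ m ∈ Bᶜ, α m)
    (u : ι → E) (hu : ∀ m, ‖u m‖ = 1)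
    (hθ : ∀ m ∉ B, ‖u m - ‖x‖⁻¹ • x‖ ≤ θ) :
    ⟪x, ∑ m, α m • u m⟫_ℝ ≥ ((2 - θ ^ 2 / 2) * Cα - 1) * ‖x‖ :=
  aggregated_alignment_bound_general x α hα hαsum B Cα θ hCα u hu hθ
end

section
/- Honest-client inner-product bound in the strongly convex case (bound D1). Suppose ⟨∇F(w1) − ∇F(w2), w1 − w2⟩ ≥ μ‖w1 − w2‖² for all w1, w2, ∇F(w*) = 0, and the bounded-heterogeneity condition with parameter θ holds at w, with ∇F(w) and ∇F_m(w) (m ∉ B) nonzero. Then Σ_{m∉B} α_m ⟨w − w*, ∇F_m(w)/‖∇F_m(w)‖⟩ ≥ μ·C_α·‖w − w*‖²/‖∇F(w)‖ − C_α·θ·‖w − w*‖. -/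
open Finset
open scoped InnerProductSpace

/-! Strong monotonicity between `w` and `w*`, where `∇F(w*) = 0`, bounds `⟨w - w*, ∇F(w)/‖∇F(w)‖⟩`
from below by `μ‖w - w*‖²/‖∇F(w)‖`. Each honest normalized gradient lies within `θ` of
`∇F(w)/‖∇F(w)‖`, so by Cauchy–Schwarz its inner product with `w - w*` is smaller by at most
`θ‖w - w*‖`; summing with the weights `α_m ≥ 0` gives the bound. -/

section InnerProduct

variable {E : Type*} [NormedAddCommGroup E] [InnerProductSpace ℝ E]

theorem real_inner_sub_norm_mul_le_of_norm_sub_le {u g : E} {θ : ℝ} (v : E)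
    (h : ‖u - g‖ ≤ θ) : ⟪v, g⟫_ℝ - ‖v‖ * θ ≤ ⟪v, u⟫_ℝ := by
  have hcs : |⟪v, u - g⟫_ℝ| ≤ ‖v‖ * θ :=
    (abs_real_inner_le_norm v _).trans (mul_le_mul_of_nonneg_left h (norm_nonneg v))
  rw [inner_sub_right] at hcs
  linarith [(abs_le.mp hcs).1]

/-- At `g = 0` both sides are the junk value `0` (`x / 0 = 0`, `‖0‖⁻¹ = 0`). -/
theorem div_norm_le_real_inner_inv_norm_smul {v g : E} {μ : ℝ}
    (h : μ * ‖v‖ ^ 2 ≤ ⟪g, v⟫_ℝ) : μ * ‖v‖ ^ 2 / ‖g‖ ≤ ⟪v, ‖g‖⁻¹ • g⟫_ℝ := by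
  rw [real_inner_smul_right, real_inner_comm, div_eq_inv_mul]
  exact mul_le_mul_of_nonneg_left h (inv_nonneg.mpr (norm_nonneg g))

end InnerProduct

theorem fedNGA_honest_inner_product_bound_general
    {E : Type*} [NormedAddCommGroup E] [InnerProductSpace ℝ E]
    {ι : Type*} [Fintype ι] [DecidableEq ι]
    (α : ι → ℝ) (hαpos : ∀ m, 0 < α m)
    (gradFm : ι → E → E)
    (gradF : E → E)
    (B : Finset ι) (Cα : ℝ) (hCα : Cα = ∑ m ∈ Bᶜ, α m)
    (μ θ : ℝ)
    (hsc : ∀ w1 w2 : E, ⟪gradF w1 - gradF w2, w1 - w2⟫_ℝ ≥ μ * ‖w1 - w2‖ ^ 2)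
    (wstar : E) (hstar : gradF wstar = 0)
    (w : E)
    (hhet : ∀ m ∉ B, ‖‖gradFm m w‖⁻¹ • gradFm m w - ‖gradF w‖⁻¹ • gradF w‖ ≤ θ) :
    ∑ m ∈ Bᶜ, α m * ⟪w - wstar, ‖gradFm m w‖⁻¹ • gradFm m w⟫_ℝ ≥
      μ * Cα * ‖w - wstar‖ ^ 2 / ‖gradF w‖ - Cα * θ * ‖w - wstar‖ := by
  have hglobal : μ * ‖w - wstar‖ ^ 2 / ‖gradF w‖ ≤ ⟪w - wstar, ‖gradF w‖⁻¹ • gradF w⟫_ℝ :=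
    div_norm_le_real_inner_inv_norm_smul (by simpa [hstar] using hsc w wstar)
  have hclient : ∀ m ∈ Bᶜ, α m * (μ * ‖w - wstar‖ ^ 2 / ‖gradF w‖ - θ * ‖w - wstar‖) ≤
      α m * ⟪w - wstar, ‖gradFm m w‖⁻¹ • gradFm m w⟫_ℝ := by
    intro m hm
    have hdev := real_inner_sub_norm_mul_le_of_norm_sub_le (w - wstar) (hhet m (mem_compl.mp hm))
    exact mul_le_mul_of_nonneg_left (by linarith) (hαpos m).le
  calc μ * Cα * ‖w - wstar‖ ^ 2 / ‖gradF w‖ - Cα * θ * ‖w - wstar‖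
      = ∑ m ∈ Bᶜ, α m * (μ * ‖w - wstar‖ ^ 2 / ‖gradF w‖ - θ * ‖w - wstar‖) := by
        rw [← sum_mul, ← hCα]; ring
    _ ≤ _ := sum_le_sum hclient

/-- Honest-client inner-product bound in the strongly convex case (bound D1). -/
theorem fedNGA_honest_inner_product_bound
    {E : Type*} [NormedAddCommGroup E] [InnerProductSpace ℝ E]
    {ι : Type*} [Fintype ι] [DecidableEq ι]
    (α : ι → ℝ) (hαpos : ∀ m, 0 < α m) (hαsum : ∑ m, α m = 1)
    (Fm : ι → E → ℝ) (gradFm : ι → E → E)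
    (F : E → ℝ) (hF : ∀ w, F w = ∑ m, α m * Fm m w)
    (gradF : E → E) (hgradF : ∀ w, gradF w = ∑ m, α m • gradFm m w)
    (B : Finset ι) (Cα : ℝ) (hCα : Cα = ∑ m ∈ Bᶜ, α m)
    (μ θ : ℝ)
    (hsc : ∀ w1 w2 : E, ⟪gradF w1 - gradF w2, w1 - w2⟫_ℝ ≥ μ * ‖w1 - w2‖ ^ 2)
    (wstar : E) (hstar : gradF wstar = 0)
    (w : E)
    (hgrad_ne : gradF w ≠ 0)
    (hgradm_ne : ∀ m ∉ B, gradFm m w ≠ 0)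
    (hhet : ∀ m ∉ B, ‖‖gradFm m w‖⁻¹ • gradFm m w - ‖gradF w‖⁻¹ • gradF w‖ ≤ θ) :
    ∑ m ∈ Bᶜ, α m * ⟪w - wstar, ‖gradFm m w‖⁻¹ • gradFm m w⟫_ℝ ≥
      μ * Cα * ‖w - wstar‖ ^ 2 / ‖gradF w‖ - Cα * θ * ‖w - wstar‖ :=
  fedNGA_honest_inner_product_bound_general α hαpos gradFm gradF B Cα hCα μ θ hsc wstar hstar w hhet
end

section
/- Vanishing average gradient norm (Remark 1, first bullet). Suppose F is L-smooth, bounded below by F_inf, the bounded-heterogeneity condition with parameter θ holds along all iterates, every Byzantine upload is a nonzero vector, (2 − θ²/2)·C_α − 1 > 0, the step sizes satisfy η^t > 0, Σ_{t=0}^{∞} η^t = ∞, and Σ_{t=0}^{∞} (η^t)² < ∞. Then the weighted averages (1/Σ_{t=0}^{T−1} η^t)·Σ_{t=0}^{T−1} η^t ‖∇F(w^t)‖ of the Fed-NGA iterates converge to 0 as T → ∞; consequently inf_{t} ‖∇F(w^t)‖ = 0. -/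
/-!
The normalized update direction `d = ∑ α_m • g_m / ‖g_m‖` has norm at most one, and it is aligned
with `∇F`: honest directions lie within `θ` of `∇F / ‖∇F‖`, so their inner product with `∇F` is at
least `(1 - θ² / 2) ‖∇F‖`, while a Byzantine direction costs at most `‖∇F‖`; hence
`⟪∇F, d⟫ ≥ c ‖∇F‖` with `c = (2 - θ² / 2) C_α - 1 > 0`. Smoothness then gives the descent inequality
`F(w^{t+1}) ≤ F(w^t) - c η^t ‖∇F(w^t)‖ + |L| (η^t)² / 2`, and telescoping against `F_inf` bounds
`∑ η^t ‖∇F(w^t)‖` uniformly in `T`. Dividing by `∑ η^t → ∞` gives the vanishing average, and the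
infimum is bounded by every such average.
-/

open Finset Filter
open scoped InnerProductSpace

section Alignment

variable {E : Type*} [NormedAddCommGroup E] [InnerProductSpace ℝ E]

theorem one_sub_sq_div_two_le_inner_of_norm_sub_le {u v : E} {θ : ℝ}
    (hu : ‖u‖ = 1) (hv : ‖v‖ = 1) (huv : ‖u - v‖ ≤ θ) :
    1 - θ ^ 2 / 2 ≤ ⟪u, v⟫_ℝ := by
  have hsq : ‖u - v‖ ^ 2 ≤ θ ^ 2 := pow_le_pow_left₀ (norm_nonneg _) huv 2
  rw [norm_sub_sq_real, hu, hv] at hsq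
  linarith

theorem mul_norm_le_inner_of_norm_sub_normalize_le {x u : E} {θ : ℝ}
    (hx : x ≠ 0) (hu : ‖u‖ = 1) (hux : ‖u - ‖x‖⁻¹ • x‖ ≤ θ) :
    (1 - θ ^ 2 / 2) * ‖x‖ ≤ ⟪x, u⟫_ℝ := by
  have hxpos : 0 < ‖x‖ := norm_pos_iff.mpr hx
  have hxunit : ‖‖x‖⁻¹ • x‖ = 1 := norm_smul_inv_norm hx
  have hinner := one_sub_sq_div_two_le_inner_of_norm_sub_le hu hxunit hux
  rw [real_inner_comm, real_inner_smul_left] at hinner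
  calc (1 - θ ^ 2 / 2) * ‖x‖ ≤ ‖x‖⁻¹ * ⟪x, u⟫_ℝ * ‖x‖ := by gcongr
    _ = ⟪x, u⟫_ℝ := by field_simp

theorem mul_norm_le_inner_sum_smul {ι : Type*} [Fintype ι] [DecidableEq ι]
    {α : ι → ℝ} (hα : ∀ m, 0 ≤ α m) (hαsum : ∑ m, α m = 1) (B : Finset ι)
    {x : E} {u : ι → E} {θ : ℝ} (hx : x ≠ 0) (hu : ∀ m, ‖u m‖ = 1)
    (hclose : ∀ m ∉ B, ‖u m - ‖x‖⁻¹ • x‖ ≤ θ) :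
    ((2 - θ ^ 2 / 2) * ∑ m ∈ Bᶜ, α m - 1) * ‖x‖ ≤ ⟪x, ∑ m, α m • u m⟫_ℝ := by
  have hbyz : ∀ m ∈ B, α m * -‖x‖ ≤ α m * ⟪x, u m⟫_ℝ := fun m _ => by
    have := real_inner_le_norm x (-u m)
    rw [inner_neg_right, norm_neg, hu m] at this
    exact mul_le_mul_of_nonneg_left (by linarith) (hα m)
  have hhonest : ∀ m ∈ Bᶜ, α m * ((1 - θ ^ 2 / 2) * ‖x‖) ≤ α m * ⟪x, u m⟫_ℝ := fun m hm =>
    mul_le_mul_of_nonneg_left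
      (mul_norm_le_inner_of_norm_sub_normalize_le hx (hu m) (hclose m (mem_compl.mp hm))) (hα m)
  have hB : ∑ m ∈ B, α m = 1 - ∑ m ∈ Bᶜ, α m := by
    rw [← hαsum, ← sum_add_sum_compl B α, add_sub_cancel_right]
  calc ((2 - θ ^ 2 / 2) * ∑ m ∈ Bᶜ, α m - 1) * ‖x‖
      = ∑ m ∈ B, α m * -‖x‖ + ∑ m ∈ Bᶜ, α m * ((1 - θ ^ 2 / 2) * ‖x‖) := by
        rw [← sum_mul, ← sum_mul, hB]; ring
    _ ≤ ∑ m ∈ B, α m * ⟪x, u m⟫_ℝ + ∑ m ∈ Bᶜ, α m * ⟪x, u m⟫_ℝ :=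
        add_le_add (sum_le_sum hbyz) (sum_le_sum hhonest)
    _ = ⟪x, ∑ m, α m • u m⟫_ℝ := by
        simp only [sum_add_sum_compl, inner_sum, real_inner_smul_right]

end Alignment

theorem apply_sub_smul_le_of_quadratic_upper_bound
    {E : Type*} [NormedAddCommGroup E] [InnerProductSpace ℝ E]
    {F : E → ℝ} {gradF : E → E} {L : ℝ}
    (hsmooth : ∀ w1 w2 : E, F w1 - F w2 ≤ ⟪gradF w2, w1 - w2⟫_ℝ + L / 2 * ‖w1 - w2‖ ^ 2)
    {w d : E} {η c : ℝ} (hη : 0 ≤ η) (hd : ‖d‖ ≤ 1) (hdir : c * ‖gradF w‖ ≤ ⟪gradF w, d⟫_ℝ) :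
    F (w - η • d) ≤ F w - c * (η * ‖gradF w‖) + |L| / 2 * η ^ 2 := by
  have hstep := hsmooth (w - η • d) w
  rw [sub_sub_cancel_left, inner_neg_right, real_inner_smul_right, norm_neg, norm_smul,
    Real.norm_of_nonneg hη] at hstep
  have hinner : η * (c * ‖gradF w‖) ≤ η * ⟪gradF w, d⟫_ℝ := mul_le_mul_of_nonneg_left hdir hη
  have hquad : L / 2 * (η * ‖d‖) ^ 2 ≤ |L| / 2 * η ^ 2 := by
    have hd2 : (η * ‖d‖) ^ 2 ≤ η ^ 2 := by
      rw [mul_pow]; exact mul_le_of_le_one_right (sq_nonneg η) (pow_le_one₀ (norm_nonneg d) hd)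
    calc L / 2 * (η * ‖d‖) ^ 2 ≤ |L| / 2 * (η * ‖d‖) ^ 2 := by
          gcongr; exact le_abs_self L
      _ ≤ |L| / 2 * η ^ 2 := by gcongr
  linarith

theorem sum_range_le_of_descent {f b e : ℕ → ℝ} {finf c K : ℝ} (hc : 0 < c) (hK : 0 ≤ K)
    (hf : ∀ t, finf ≤ f t) (he : ∀ t, 0 ≤ e t) (hsum : Summable e)
    (hdesc : ∀ t, f (t + 1) ≤ f t - c * b t + K * e t) (T : ℕ) :
    ∑ t ∈ range T, b t ≤ (f 0 - finf + K * ∑' t, e t) / c := by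
  have htelescope : ∀ T, c * ∑ t ∈ range T, b t ≤ f 0 - f T + K * ∑ t ∈ range T, e t := by
    intro T
    induction T with
    | zero => simp
    | succ T ih =>
      rw [sum_range_succ, sum_range_succ]
      linarith [hdesc T]
  have hpartial : ∑ t ∈ range T, e t ≤ ∑' t, e t := hsum.sum_le_tsum _ fun t _ => he t
  rw [le_div_iff₀ hc, mul_comm]
  nlinarith [htelescope T, hf T]

section WeightedAverage

variable {η a : ℕ → ℝ}

theorem tendsto_weighted_average_zero_of_sum_le (hη : ∀ t, 0 ≤ η t) (ha : ∀ t, 0 ≤ a t)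
    (hdiv : Tendsto (fun T => ∑ t ∈ range T, η t) atTop atTop) {K : ℝ}
    (hK : ∀ T, ∑ t ∈ range T, η t * a t ≤ K) :
    Tendsto (fun T => (1 / ∑ t ∈ range T, η t) * ∑ t ∈ range T, η t * a t) atTop (nhds 0) := by
  have hweight : ∀ T, 0 ≤ 1 / ∑ t ∈ range T, η t := fun T =>
    one_div_nonneg.mpr (sum_nonneg fun t _ => hη t)
  have hupper : Tendsto (fun T => (1 / ∑ t ∈ range T, η t) * K) atTop (nhds 0) := by
    simpa using (hdiv.inv_tendsto_atTop).mul_const K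
  refine tendsto_of_tendsto_of_tendsto_of_le_of_le tendsto_const_nhds hupper
    (fun T => mul_nonneg (hweight T) (sum_nonneg fun t _ => mul_nonneg (hη t) (ha t)))
    (fun T => mul_le_mul_of_nonneg_left (hK T) (hweight T))

theorem iInf_eq_zero_of_weighted_average_tendsto_zero (hη : ∀ t, 0 ≤ η t) (ha : ∀ t, 0 ≤ a t)
    (hdiv : Tendsto (fun T => ∑ t ∈ range T, η t) atTop atTop)
    (havg : Tendsto (fun T => (1 / ∑ t ∈ range T, η t) * ∑ t ∈ range T, η t * a t)
      atTop (nhds 0)) :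
    ⨅ t, a t = 0 := by
  have hbdd : BddBelow (Set.range a) := ⟨0, by rintro _ ⟨t, rfl⟩; exact ha t⟩
  have hle_avg : ∀ᶠ T in atTop,
      ⨅ t, a t ≤ (1 / ∑ t ∈ range T, η t) * ∑ t ∈ range T, η t * a t := by
    filter_upwards [hdiv.eventually_gt_atTop 0] with T hT
    rw [one_div, ← div_eq_inv_mul, le_div_iff₀ hT, mul_sum]
    exact sum_le_sum fun t _ => by
      rw [mul_comm]; exact mul_le_mul_of_nonneg_left (ciInf_le hbdd t) (hη t)
  exact le_antisymm (ge_of_tendsto havg hle_avg) (le_ciInf ha)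

end WeightedAverage

theorem fedNGA_vanishing_average_gradient_general
    {E : Type*} [NormedAddCommGroup E] [InnerProductSpace ℝ E]
    {ι : Type*} [Fintype ι] [DecidableEq ι]
    (α : ι → ℝ) (hαpos : ∀ m, 0 < α m) (hαsum : ∑ m, α m = 1)
    (gradFm : ι → E → E)
    (F : E → ℝ)
    (gradF : E → E)
    (B : Finset ι) (Cα : ℝ) (hCα : Cα = ∑ m ∈ Bᶜ, α m)
    (L θ : ℝ)
    (hsmooth : ∀ w1 w2 : E, F w1 - F w2 ≤ ⟪gradF w2, w1 - w2⟫_ℝ + L / 2 * ‖w1 - w2‖ ^ 2)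
    -- bounded below
    (Finf : ℝ) (hFinf : ∀ w : E, Finf ≤ F w)
    -- step sizes
    (η : ℕ → ℝ) (hηpos : ∀ t, 0 < η t)
    (hdiv : Tendsto (fun T => ∑ t ∈ range T, η t) atTop atTop)
    (hsq : Summable fun t => (η t) ^ 2)
    -- Fed-NGA iterates
    (w : ℕ → E) (g : ι → ℕ → E)
    (hg_honest : ∀ m ∉ B, ∀ t, g m t = gradFm m (w t))
    (hg_byz : ∀ m ∈ B, ∀ t, g m t ≠ 0)
    (hupdate : ∀ t, w (t + 1) = w t - η t • ∑ m, α m • (‖g m t‖⁻¹ • g m t))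
    -- bounded heterogeneity along the iterates
    (hgrad_ne : ∀ t, gradF (w t) ≠ 0)
    (hgradm_ne : ∀ t, ∀ m ∉ B, gradFm m (w t) ≠ 0)
    (hhet : ∀ t, ∀ m ∉ B,
      ‖‖gradFm m (w t)‖⁻¹ • gradFm m (w t) - ‖gradF (w t)‖⁻¹ • gradF (w t)‖ ≤ θ)
    (hcond : (2 - θ ^ 2 / 2) * Cα - 1 > 0) :
    Tendsto
      (fun T => (1 / ∑ t ∈ range T, η t) * ∑ t ∈ range T, η t * ‖gradF (w t)‖)
      atTop (nhds 0) ∧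
    ⨅ t, ‖gradF (w t)‖ = 0 := by
  have hunit : ∀ m t, ‖‖g m t‖⁻¹ • g m t‖ = 1 := fun m t => by
    by_cases hm : m ∈ B
    · exact norm_smul_inv_norm (hg_byz m hm t)
    · rw [hg_honest m hm t]; exact norm_smul_inv_norm (hgradm_ne t m hm)
  have hdir_norm : ∀ t, ‖∑ m, α m • (‖g m t‖⁻¹ • g m t)‖ ≤ 1 := fun t =>
    mem_closedBall_zero_iff.mp <| (convex_closedBall (0 : E) 1).sum_mem
      (fun m _ => (hαpos m).le) hαsum fun m _ => mem_closedBall_zero_iff.mpr (hunit m t).le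
  have halign : ∀ t, ((2 - θ ^ 2 / 2) * Cα - 1) * ‖gradF (w t)‖
      ≤ ⟪gradF (w t), ∑ m, α m • (‖g m t‖⁻¹ • g m t)⟫_ℝ := fun t => by
    rw [hCα]
    refine mul_norm_le_inner_sum_smul (fun m => (hαpos m).le) hαsum B (hgrad_ne t)
      (fun m => hunit m t) fun m hm => ?_
    rw [hg_honest m hm t]
    exact hhet t m hm
  have hdesc : ∀ t, F (w (t + 1)) ≤ F (w t) - ((2 - θ ^ 2 / 2) * Cα - 1) *
      (η t * ‖gradF (w t)‖) + |L| / 2 * η t ^ 2 := fun t => by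
    rw [hupdate t]
    exact apply_sub_smul_le_of_quadratic_upper_bound hsmooth (hηpos t).le (hdir_norm t) (halign t)
  have hbounded := sum_range_le_of_descent hcond (by positivity) (fun t => hFinf (w t))
    (fun t => sq_nonneg (η t)) hsq hdesc
  have havg := tendsto_weighted_average_zero_of_sum_le (fun t => (hηpos t).le)
    (fun t => norm_nonneg _) hdiv hbounded
  exact ⟨havg, iInf_eq_zero_of_weighted_average_tendsto_zero (fun t => (hηpos t).le)
    (fun t => norm_nonneg _) hdiv havg⟩

/-- Vanishing average gradient norm (Remark 1, first bullet). -/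
theorem fedNGA_vanishing_average_gradient
    {E : Type*} [NormedAddCommGroup E] [InnerProductSpace ℝ E]
    {ι : Type*} [Fintype ι] [DecidableEq ι]
    (α : ι → ℝ) (hαpos : ∀ m, 0 < α m) (hαsum : ∑ m, α m = 1)
    (Fm : ι → E → ℝ) (gradFm : ι → E → E)
    (F : E → ℝ) (hF : ∀ w, F w = ∑ m, α m * Fm m w)
    (gradF : E → E) (hgradF : ∀ w, gradF w = ∑ m, α m • gradFm m w)
    (B : Finset ι) (Cα : ℝ) (hCα : Cα = ∑ m ∈ Bᶜ, α m)
    (L θ : ℝ)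
    (hsmooth : ∀ w1 w2 : E, F w1 - F w2 ≤ ⟪gradF w2, w1 - w2⟫_ℝ + L / 2 * ‖w1 - w2‖ ^ 2)
    -- bounded below
    (Finf : ℝ) (hFinf : ∀ w : E, Finf ≤ F w)
    -- step sizes
    (η : ℕ → ℝ) (hηpos : ∀ t, 0 < η t)
    (hdiv : Tendsto (fun T => ∑ t ∈ range T, η t) atTop atTop)
    (hsq : Summable fun t => (η t) ^ 2)
    -- Fed-NGA iterates
    (w : ℕ → E) (g : ι → ℕ → E)
    (hg_honest : ∀ m ∉ B, ∀ t, g m t = gradFm m (w t))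
    (hg_byz : ∀ m ∈ B, ∀ t, g m t ≠ 0)
    (hupdate : ∀ t, w (t + 1) = w t - η t • ∑ m, α m • (‖g m t‖⁻¹ • g m t))
    -- bounded heterogeneity along the iterates
    (hgrad_ne : ∀ t, gradF (w t) ≠ 0)
    (hgradm_ne : ∀ t, ∀ m ∉ B, gradFm m (w t) ≠ 0)
    (hhet : ∀ t, ∀ m ∉ B,
      ‖‖gradFm m (w t)‖⁻¹ • gradFm m (w t) - ‖gradF (w t)‖⁻¹ • gradF (w t)‖ ≤ θ)
    (hcond : (2 - θ ^ 2 / 2) * Cα - 1 > 0) :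
    Tendsto
      (fun T => (1 / ∑ t ∈ range T, η t) * ∑ t ∈ range T, η t * ‖gradF (w t)‖)
      atTop (nhds 0) ∧
    ⨅ t, ‖gradF (w t)‖ = 0 :=
  fedNGA_vanishing_average_gradient_general α hαpos hαsum gradFm F gradF B Cα hCα L θ hsmooth Finf
    hFinf η hηpos hdiv hsq w g hg_honest hg_byz hupdate hgrad_ne hgradm_ne hhet hcond
end
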